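/- Let λ ∈ ℂ with |λ| > 1. Suppose ξ₁, ξ₂ : ℂ² × [0,∞) → ℂ are as in the context and satisfy ξ₁(λz₁ + z₂, λz₂, φ(x)) = λ·ξ₁(z₁,z₂,x) + ξ₂(z₁,z₂,x) and ξ₂(λz₁ + z₂, λz₂, φ(x)) = λ·ξ₂(z₁,z₂,x) for all (z₁,z₂) ∈ ℂ² and x ≥ 0. Then there exist continuous functions a₁, a₂ : [0,∞) → ℂ with a₁(0) = a₂(0) = 0 satisfying a₁(φ(x)) = λ·a₁(x) + a₂(x) and a₂(φ(x)) = λ·a₂(x), such that ξ₁(z₁,z₂,x) = z₁ + a₁(x) and ξ₂(z₁,z₂,x) = z₂ + a₂(x). (Classification in Case 4 of Section 3.2, underlying Theorem 3.12) -/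

import Mathlib

/-!
Subtracting the identity and `ξⱼ(0, 0, x)` reduces the claim to the vanishing of a function
`H(z, x)` that is continuous, holomorphic in `z`, zero at `x = 0` and at `z = 0`, and satisfies
`H(G z, φ x) = λ H(z, x)` for the shear `G(z₁, z₂) = (λz₁ + z₂, λz₂)`. Along a backward
`φ`-orbit `uₙ → 0` of `x` we get `H(w, x) = λⁿ H(G⁻ⁿ w, uₙ)`, while `H(·, uₙ) → 0` locally
uniformly. By the Schwarz lemma, a difference of `H(·, uₙ)` between two points `λ⁻ⁿ`-close
along a complex line is then `o(λ⁻ⁿ)`. This applies first in the `z₁`-direction, which `G⁻ⁿ`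
contracts by exactly `λ⁻ⁿ`, so `H` does not depend on `z₁`, and then in the `z₂`-direction.
-/

open Filter Metric Set Topology

theorem exists_backward_orbit_tendsto_zero {φ : ℝ → ℝ}
    (hφcont : ContinuousOn φ (Ici 0)) (hφsurj : SurjOn φ (Ici 0) (Ici 0)) (hφ0 : φ 0 = 0)
    (hexp : ∀ x : ℝ, 0 < x → x < φ x) {x : ℝ} (hx : 0 ≤ x) :
    ∃ u : ℕ → ℝ, u 0 = x ∧ (∀ n, 0 ≤ u n) ∧ (∀ n, φ (u (n + 1)) = u n) ∧
      Tendsto u atTop (𝓝 0) := by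
  set ψ := Function.invFunOn φ (Ici 0)
  set u : ℕ → ℝ := fun n => ψ^[n] x
  have hu_nonneg : ∀ n, 0 ≤ u n := fun n => hφsurj.mapsTo_invFunOn.iterate n hx
  have hrec : ∀ n, φ (u (n + 1)) = u n := fun n => by
    simp only [u, Function.iterate_succ_apply']
    exact hφsurj.rightInvOn_invFunOn (hu_nonneg n)
  have hle : ∀ y, 0 ≤ y → y ≤ φ y := fun y hy => by
    rcases hy.eq_or_lt with rfl | hy
    · exact hφ0.ge
    · exact (hexp y hy).le
  have hanti : Antitone u := antitone_nat_of_succ_le fun n =>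
    (hle _ (hu_nonneg (n + 1))).trans (hrec n).le
  obtain ⟨L, hL⟩ : ∃ L, Tendsto u atTop (𝓝 L) :=
    ⟨_, tendsto_atTop_ciInf hanti ⟨0, forall_mem_range.2 hu_nonneg⟩⟩
  have hL_nonneg : 0 ≤ L := ge_of_tendsto' hL hu_nonneg
  have hshift : Tendsto (fun n => u (n + 1)) atTop (𝓝[Ici 0] L) :=
    tendsto_nhdsWithin_iff.2 ⟨hL.comp (tendsto_add_atTop_nat 1),
      Eventually.of_forall fun n => hu_nonneg (n + 1)⟩
  have hφshift : Tendsto (fun n => φ (u (n + 1))) atTop (𝓝 L) := by simpa only [hrec] using hL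
  have hfix : φ L = L := tendsto_nhds_unique ((hφcont L hL_nonneg).tendsto.comp hshift) hφshift
  obtain rfl : L = 0 := by
    by_contra hL0
    exact (hexp L (hL_nonneg.lt_of_ne' hL0)).ne' hfix
  exact ⟨u, rfl, hu_nonneg, hrec, hL⟩

theorem tendsto_natCast_mul_pow_of_norm_lt_one {μ : ℂ} (hμ : ‖μ‖ < 1) :
    Tendsto (fun n : ℕ => (n : ℂ) * μ ^ n) atTop (𝓝 0) := by
  rw [tendsto_zero_iff_norm_tendsto_zero]
  simpa using tendsto_self_mul_const_pow_of_lt_one (norm_nonneg μ) hμ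

section UniformLimit

variable {E V : Type*} [NormedAddCommGroup E] [NormedSpace ℂ E] [NormedAddCommGroup V]

theorem tendstoUniformlyOn_apply_add_smul {F : E → ℝ → V}
    (hcont : ContinuousOn (Function.uncurry F) (univ ×ˢ Ici 0)) (hF0 : ∀ z, F z 0 = 0)
    {p : ℕ → E} (hp : Tendsto p atTop (𝓝 0)) {u : ℕ → ℝ} (hu : Tendsto u atTop (𝓝[≥] 0))
    (v : E) :
    TendstoUniformlyOn (fun n w => F (p n + w • v) (u n)) 0 atTop (closedBall (0 : ℂ) 1) := by
  have hΦ : ContinuousOn (Function.uncurry fun (q : E × ℝ) (w : ℂ) => F (q.1 + w • v) q.2)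
      ((univ ×ˢ Ici 0) ×ˢ closedBall 0 1) :=
    hcont.comp (f := fun q : (E × ℝ) × ℂ => (q.1.1 + q.2 • v, q.1.2)) (by fun_prop)
      fun q hq => ⟨mem_univ _, hq.1.2⟩
  have hpu : Tendsto (fun n => (p n, u n)) atTop (𝓝[univ ×ˢ Ici 0] (0, 0)) := by
    rw [nhdsWithin_prod_eq, nhdsWithin_univ]
    exact hp.prodMk hu
  rw [Metric.tendstoUniformlyOn_iff]
  intro ε hε
  obtain ⟨N, hN, hNε⟩ := (isCompact_closedBall (0 : ℂ) 1).mem_uniformity_of_prod hΦ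
    (q := (0, 0)) ⟨mem_univ _, self_mem_Ici⟩ (dist_mem_uniformity hε)
  filter_upwards [hpu hN] with n hn w hw
  simpa [hF0, dist_comm] using hNε _ hn w hw

variable [NormedSpace ℂ V]

theorem tendsto_inv_smul_sub_of_tendstoUniformlyOn_ball {f : ℕ → ℂ → V}
    (hf : ∀ n, DifferentiableOn ℂ (f n) (ball 0 1))
    (hsmall : TendstoUniformlyOn f 0 atTop (ball 0 1))
    {c : ℕ → ℂ} (hc : Tendsto c atTop (𝓝 0)) :
    Tendsto (fun n => (c n)⁻¹ • (f n (c n) - f n 0)) atTop (𝓝 0) := by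
  rw [Metric.tendsto_nhds]
  intro ε hε
  rw [Metric.tendstoUniformlyOn_iff] at hsmall
  filter_upwards [hsmall (ε / 3) (by positivity), hc.eventually (ball_mem_nhds 0 one_pos)]
    with n hsmall_n hc_n
  have hmaps : MapsTo (f n) (ball 0 1) (closedBall (f n 0) (2 * ε / 3)) := fun w hw => by
    have h0 := hsmall_n 0 (mem_ball_self one_pos)
    have hw' := hsmall_n w hw
    simp only [Pi.zero_apply, dist_zero_left] at h0 hw'
    rw [mem_closedBall, dist_eq_norm]
    linarith [norm_sub_le (f n w) (f n 0)]
  have hschwarz := Complex.dist_le_div_mul_dist_of_mapsTo_ball (hf n) hmaps hc_n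
  rw [div_one, dist_zero_right, dist_eq_norm] at hschwarz
  rw [dist_zero_right, norm_smul, norm_inv]
  rcases eq_or_ne (c n) 0 with h | h
  · simpa [h] using hε
  calc ‖c n‖⁻¹ * ‖f n (c n) - f n 0‖ ≤ ‖c n‖⁻¹ * (2 * ε / 3 * ‖c n‖) := by gcongr
    _ = 2 * ε / 3 := by field_simp
    _ < ε := by linarith

theorem tendsto_inv_smul_sub_of_continuousOn {F : E → ℝ → V}
    (hcont : ContinuousOn (Function.uncurry F) (univ ×ˢ Ici 0))
    (hholo : ∀ x, 0 ≤ x → Differentiable ℂ (F · x)) (hF0 : ∀ z, F z 0 = 0)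
    {p : ℕ → E} (hp : Tendsto p atTop (𝓝 0)) {u : ℕ → ℝ} (hu_nonneg : ∀ n, 0 ≤ u n)
    (hu : Tendsto u atTop (𝓝 0)) {c : ℕ → ℂ} (hc : Tendsto c atTop (𝓝 0)) (v : E) :
    Tendsto (fun n => (c n)⁻¹ • (F (p n + c n • v) (u n) - F (p n) (u n))) atTop (𝓝 0) := by
  have hu' : Tendsto u atTop (𝓝[≥] 0) :=
    tendsto_nhdsWithin_iff.2 ⟨hu, Eventually.of_forall hu_nonneg⟩
  have hsmall := (tendstoUniformlyOn_apply_add_smul hcont hF0 hp hu' v).mono ball_subset_closedBall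
  simpa using tendsto_inv_smul_sub_of_tendstoUniformlyOn_ball
    (fun n => ((hholo _ (hu_nonneg n)).comp (by fun_prop)).differentiableOn) hsmall hc

end UniformLimit

section Shear

variable {lam : ℂ} {φ : ℝ → ℝ} {H : ℂ × ℂ → ℝ → ℂ} {u : ℕ → ℝ}

theorem apply_eq_pow_mul_apply_of_backward (hlam : lam ≠ 0)
    (heq : ∀ z : ℂ × ℂ, ∀ x : ℝ, 0 ≤ x →
      H (lam * z.1 + z.2, lam * z.2) (φ x) = lam * H z x)
    (hu_nonneg : ∀ n, 0 ≤ u n) (hrec : ∀ n, φ (u (n + 1)) = u n) (w : ℂ × ℂ) (n : ℕ) :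
    H w (u 0) = lam ^ n * H (lam⁻¹ ^ n * (w.1 - n * lam⁻¹ * w.2), lam⁻¹ ^ n * w.2) (u n) := by
  induction n with
  | zero => simp
  | succ n ih =>
    have hinv : lam * lam⁻¹ = 1 := mul_inv_cancel₀ hlam
    have h₁ : lam⁻¹ ^ n * (w.1 - n * lam⁻¹ * w.2) =
        lam * (lam⁻¹ ^ (n + 1) * (w.1 - (n + 1 : ℕ) * lam⁻¹ * w.2)) + lam⁻¹ ^ (n + 1) * w.2 := by
      push_cast
      linear_combination ((n + 1) * lam⁻¹ ^ (n + 1) * w.2 - lam⁻¹ ^ n * w.1) * hinv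
    have h₂ : lam⁻¹ ^ n * w.2 = lam * (lam⁻¹ ^ (n + 1) * w.2) := by
      linear_combination -(lam⁻¹ ^ n * w.2) * hinv
    rw [ih, ← hrec n, h₁, h₂, heq (_, _) _ (hu_nonneg (n + 1))]
    ring

theorem apply_eq_apply_zero_fst (hlam : 1 < ‖lam‖)
    (hcont : ContinuousOn (Function.uncurry H) (univ ×ˢ Ici 0))
    (hholo : ∀ x : ℝ, 0 ≤ x → Differentiable ℂ (H · x)) (hH0 : ∀ z, H z 0 = 0)
    (heq : ∀ z : ℂ × ℂ, ∀ x : ℝ, 0 ≤ x → H (lam * z.1 + z.2, lam * z.2) (φ x) = lam * H z x)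
    (hu_nonneg : ∀ n, 0 ≤ u n) (hrec : ∀ n, φ (u (n + 1)) = u n) (hu : Tendsto u atTop (𝓝 0))
    (w : ℂ × ℂ) :
    H w (u 0) = H (0, w.2) (u 0) := by
  have hlam0 : lam ≠ 0 := norm_pos_iff.1 (one_pos.trans hlam)
  have hμ : ‖lam⁻¹‖ < 1 := by rw [norm_inv]; exact inv_lt_one_of_one_lt₀ hlam
  have hμn := tendsto_pow_atTop_nhds_zero_of_norm_lt_one hμ
  -- `p n` is the `n`-th backward iterate of `(0, w.2)`; that of `w` is `p n + lam⁻¹ ^ n • (w.1, 0)`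
  set p : ℕ → ℂ × ℂ := fun n => (-(n * lam⁻¹ ^ n) * (lam⁻¹ * w.2), lam⁻¹ ^ n * w.2)
  have hp : Tendsto p atTop (𝓝 0) := by
    have := ((tendsto_natCast_mul_pow_of_norm_lt_one hμ).neg.mul_const (lam⁻¹ * w.2)).prodMk_nhds
      (hμn.mul_const w.2)
    rwa [neg_zero, zero_mul, zero_mul, Prod.mk_zero_zero] at this
  have hconst : ∀ n, (lam⁻¹ ^ n)⁻¹ • (H (p n + lam⁻¹ ^ n • (w.1, 0)) (u n) - H (p n) (u n)) =
      H w (u 0) - H (0, w.2) (u 0) := by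
    intro n
    rw [apply_eq_pow_mul_apply_of_backward hlam0 heq hu_nonneg hrec w n,
      apply_eq_pow_mul_apply_of_backward hlam0 heq hu_nonneg hrec (0, w.2) n]
    simp only [p, Prod.smul_mk, Prod.mk_add_mk, smul_eq_mul, mul_zero, add_zero, inv_pow, inv_inv]
    ring_nf
  have hlim := tendsto_inv_smul_sub_of_continuousOn hcont hholo hH0 hp hu_nonneg hu hμn (w.1, 0)
  exact sub_eq_zero.1 (tendsto_const_nhds_iff.1 (hlim.congr hconst))

theorem apply_eq_zero_of_apply_zero (hlam : 1 < ‖lam‖)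
    (hcont : ContinuousOn (Function.uncurry H) (univ ×ˢ Ici 0))
    (hholo : ∀ x : ℝ, 0 ≤ x → Differentiable ℂ (H · x)) (hH0 : ∀ z, H z 0 = 0)
    (h00 : ∀ x : ℝ, 0 ≤ x → H 0 x = 0)
    (heq : ∀ z : ℂ × ℂ, ∀ x : ℝ, 0 ≤ x → H (lam * z.1 + z.2, lam * z.2) (φ x) = lam * H z x)
    (hu_nonneg : ∀ n, 0 ≤ u n) (hrec : ∀ n, φ (u (n + 1)) = u n) (hu : Tendsto u atTop (𝓝 0))
    (w : ℂ × ℂ) :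
    H w (u 0) = 0 := by
  have hlam0 : lam ≠ 0 := norm_pos_iff.1 (one_pos.trans hlam)
  have hμ : ‖lam⁻¹‖ < 1 := by rw [norm_inv]; exact inv_lt_one_of_one_lt₀ hlam
  have hfst : ∀ n (z : ℂ × ℂ), H z (u n) = H (0, z.2) (u n) := fun n z => by
    simpa using apply_eq_apply_zero_fst (u := fun k => u (k + n)) hlam hcont hholo hH0 heq
      (fun k => hu_nonneg _) (fun k => by simpa [add_right_comm] using hrec (k + n))
      (hu.comp (tendsto_add_atTop_nat n)) z
  have hconst : ∀ n, (lam⁻¹ ^ n)⁻¹ • (H (0 + lam⁻¹ ^ n • (0, w.2)) (u n) - H 0 (u n)) =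
      H w (u 0) := by
    intro n
    rw [apply_eq_pow_mul_apply_of_backward hlam0 heq hu_nonneg hrec w n, hfst n (_, lam⁻¹ ^ n * w.2),
      h00 _ (hu_nonneg n)]
    simp
  have hlim := tendsto_inv_smul_sub_of_continuousOn hcont hholo hH0 tendsto_const_nhds hu_nonneg
    hu (tendsto_pow_atTop_nhds_zero_of_norm_lt_one hμ) (0, w.2)
  exact tendsto_const_nhds_iff.1 (hlim.congr hconst)

end Shear

theorem eq_zero_of_shear_equivariant {lam : ℂ} (hlam : 1 < ‖lam‖) {φ : ℝ → ℝ}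
    (hφcont : ContinuousOn φ (Ici 0)) (hφsurj : SurjOn φ (Ici 0) (Ici 0)) (hφ0 : φ 0 = 0)
    (hexp : ∀ x : ℝ, 0 < x → x < φ x) {H : ℂ → ℂ → ℝ → ℂ}
    (hcont : ContinuousOn (fun q : ℂ × ℂ × ℝ => H q.1 q.2.1 q.2.2) (univ ×ˢ univ ×ˢ Ici 0))
    (hholo : ∀ x : ℝ, 0 ≤ x → Differentiable ℂ (fun z : ℂ × ℂ => H z.1 z.2 x))
    (hH0 : ∀ z₁ z₂ : ℂ, H z₁ z₂ 0 = 0) (h00 : ∀ x : ℝ, 0 ≤ x → H 0 0 x = 0)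
    (heq : ∀ z₁ z₂ : ℂ, ∀ x : ℝ, 0 ≤ x →
      H (lam * z₁ + z₂) (lam * z₂) (φ x) = lam * H z₁ z₂ x)
    {z₁ z₂ : ℂ} {x : ℝ} (hx : 0 ≤ x) :
    H z₁ z₂ x = 0 := by
  obtain ⟨u, rfl, hu_nonneg, hrec, hu⟩ :=
    exists_backward_orbit_tendsto_zero hφcont hφsurj hφ0 hexp hx
  exact apply_eq_zero_of_apply_zero (H := fun z y => H z.1 z.2 y) hlam
    (hcont.comp (f := fun q : (ℂ × ℂ) × ℝ => (q.1.1, q.1.2, q.2)) (by fun_prop)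
      fun q hq => ⟨mem_univ _, mem_univ _, hq.2⟩)
    hholo (fun z => hH0 z.1 z.2) h00 (fun z x hx => heq z.1 z.2 x hx) hu_nonneg hrec hu (z₁, z₂)

theorem case_4_classification_general (lam : ℂ) (hlam : 1 < ‖lam‖)
    (φ : ℝ → ℝ)
    (hφcont : ContinuousOn φ (Set.Ici 0))
    (hφbij : Set.BijOn φ (Set.Ici 0) (Set.Ici 0))
    (hφ0 : φ 0 = 0)
    (hexp : ∀ x : ℝ, 0 < x → x < φ x)
    (ξ₁ ξ₂ : ℂ → ℂ → ℝ → ℂ)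
    (hcont₁ : ContinuousOn (fun q : ℂ × ℂ × ℝ => ξ₁ q.1 q.2.1 q.2.2)
      (Set.univ ×ˢ Set.univ ×ˢ Set.Ici 0))
    (hcont₂ : ContinuousOn (fun q : ℂ × ℂ × ℝ => ξ₂ q.1 q.2.1 q.2.2)
      (Set.univ ×ˢ Set.univ ×ˢ Set.Ici 0))
    (hholo₁ : ∀ x : ℝ, 0 ≤ x → Differentiable ℂ (fun z : ℂ × ℂ => ξ₁ z.1 z.2 x))
    (hholo₂ : ∀ x : ℝ, 0 ≤ x → Differentiable ℂ (fun z : ℂ × ℂ => ξ₂ z.1 z.2 x))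
    (hbd₁ : ∀ z₁ z₂ : ℂ, ξ₁ z₁ z₂ 0 = z₁)
    (hbd₂ : ∀ z₁ z₂ : ℂ, ξ₂ z₁ z₂ 0 = z₂)
    (hL1 : ∀ z₁ z₂ : ℂ, ∀ x : ℝ, 0 ≤ x →
      ξ₁ (lam * z₁ + z₂) (lam * z₂) (φ x) = lam * ξ₁ z₁ z₂ x + ξ₂ z₁ z₂ x)
    (hL2 : ∀ z₁ z₂ : ℂ, ∀ x : ℝ, 0 ≤ x →
      ξ₂ (lam * z₁ + z₂) (lam * z₂) (φ x) = lam * ξ₂ z₁ z₂ x) :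
    ∃ a₁ a₂ : ℝ → ℂ,
      ContinuousOn a₁ (Set.Ici 0) ∧ ContinuousOn a₂ (Set.Ici 0) ∧
      a₁ 0 = 0 ∧ a₂ 0 = 0 ∧
      (∀ x : ℝ, 0 ≤ x → a₁ (φ x) = lam * a₁ x + a₂ x) ∧
      (∀ x : ℝ, 0 ≤ x → a₂ (φ x) = lam * a₂ x) ∧
      ∀ z₁ z₂ : ℂ, ∀ x : ℝ, 0 ≤ x →
        ξ₁ z₁ z₂ x = z₁ + a₁ x ∧ ξ₂ z₁ z₂ x = z₂ + a₂ x := by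
  set a₁ : ℝ → ℂ := fun x => ξ₁ 0 0 x
  set a₂ : ℝ → ℂ := fun x => ξ₂ 0 0 x
  have hmaps : MapsTo (fun x : ℝ => ((0 : ℂ), (0 : ℂ), x)) (Ici 0) (univ ×ˢ univ ×ˢ Ici 0) :=
    fun x hx => ⟨mem_univ _, mem_univ _, hx⟩
  have hca₁ : ContinuousOn a₁ (Ici 0) := hcont₁.comp (by fun_prop) hmaps
  have hca₂ : ContinuousOn a₂ (Ici 0) := hcont₂.comp (by fun_prop) hmaps
  have hfa₁ : ∀ x : ℝ, 0 ≤ x → a₁ (φ x) = lam * a₁ x + a₂ x := fun x hx => by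
    simpa using hL1 0 0 x hx
  have hfa₂ : ∀ x : ℝ, 0 ≤ x → a₂ (φ x) = lam * a₂ x := fun x hx => by
    simpa using hL2 0 0 x hx
  have hξ₂ : ∀ z₁ z₂ x, 0 ≤ x → ξ₂ z₁ z₂ x - z₂ - a₂ x = 0 := fun z₁ z₂ x hx =>
    eq_zero_of_shear_equivariant (H := fun z₁ z₂ x => ξ₂ z₁ z₂ x - z₂ - a₂ x) hlam hφcont
      hφbij.surjOn hφ0 hexp
      ((hcont₂.sub (by fun_prop)).sub (hca₂.comp (by fun_prop) fun q hq => hq.2.2))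
      (fun x hx => ((hholo₂ x hx).sub (by fun_prop)).sub_const _)
      (by simp [a₂, hbd₂]) (by simp [a₂])
      (fun z₁ z₂ x hx => by linear_combination hL2 z₁ z₂ x hx - hfa₂ x hx) hx
  have hξ₁ : ∀ z₁ z₂ x, 0 ≤ x → ξ₁ z₁ z₂ x - z₁ - a₁ x = 0 := fun z₁ z₂ x hx =>
    eq_zero_of_shear_equivariant (H := fun z₁ z₂ x => ξ₁ z₁ z₂ x - z₁ - a₁ x) hlam hφcont
      hφbij.surjOn hφ0 hexp
      ((hcont₁.sub (by fun_prop)).sub (hca₁.comp (by fun_prop) fun q hq => hq.2.2))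
      (fun x hx => ((hholo₁ x hx).sub (by fun_prop)).sub_const _)
      (by simp [a₁, hbd₁]) (by simp [a₁])
      (fun z₁ z₂ x hx => by
        linear_combination hL1 z₁ z₂ x hx - hfa₁ x hx + hξ₂ z₁ z₂ x hx) hx
  refine ⟨a₁, a₂, hca₁, hca₂, by simp [a₁, hbd₁], by simp [a₂, hbd₂], hfa₁, hfa₂,
    fun z₁ z₂ x hx => ⟨?_, ?_⟩⟩
  · linear_combination hξ₁ z₁ z₂ x hx
  · linear_combination hξ₂ z₁ z₂ x hx

/-- Case 4 of Section 3.2 (underlying Theorem 3.12): for `G(z₁,z₂) = (λz₁ + z₂, λz₂)`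
with `|λ| > 1`, any leafwise-holomorphic lift `(ξ₁, ξ₂)` restricting to the
identity on the boundary and equivariant for `T` has the form `ξ₁ = z₁ + a₁(x)`,
`ξ₂ = z₂ + a₂(x)` with `(a₁, a₂) ∈ 𝒮_{φ,λ}`. -/
theorem case_4_classification (lam : ℂ) (hlam : 1 < ‖lam‖)
    (φ : ℝ → ℝ)
    (hφcont : ContinuousOn φ (Set.Ici 0))
    (hφmono : StrictMonoOn φ (Set.Ici 0))
    (hφbij : Set.BijOn φ (Set.Ici 0) (Set.Ici 0))
    (hφ0 : φ 0 = 0)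
    (hexp : ∀ x : ℝ, 0 < x → x < φ x)
    (ξ₁ ξ₂ : ℂ → ℂ → ℝ → ℂ)
    (hcont₁ : ContinuousOn (fun q : ℂ × ℂ × ℝ => ξ₁ q.1 q.2.1 q.2.2)
      (Set.univ ×ˢ Set.univ ×ˢ Set.Ici 0))
    (hcont₂ : ContinuousOn (fun q : ℂ × ℂ × ℝ => ξ₂ q.1 q.2.1 q.2.2)
      (Set.univ ×ˢ Set.univ ×ˢ Set.Ici 0))
    (hholo₁ : ∀ x : ℝ, 0 ≤ x → Differentiable ℂ (fun z : ℂ × ℂ => ξ₁ z.1 z.2 x))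
    (hholo₂ : ∀ x : ℝ, 0 ≤ x → Differentiable ℂ (fun z : ℂ × ℂ => ξ₂ z.1 z.2 x))
    (hbd₁ : ∀ z₁ z₂ : ℂ, ξ₁ z₁ z₂ 0 = z₁)
    (hbd₂ : ∀ z₁ z₂ : ℂ, ξ₂ z₁ z₂ 0 = z₂)
    (hL1 : ∀ z₁ z₂ : ℂ, ∀ x : ℝ, 0 ≤ x →
      ξ₁ (lam * z₁ + z₂) (lam * z₂) (φ x) = lam * ξ₁ z₁ z₂ x + ξ₂ z₁ z₂ x)
    (hL2 : ∀ z₁ z₂ : ℂ, ∀ x : ℝ, 0 ≤ x →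
      ξ₂ (lam * z₁ + z₂) (lam * z₂) (φ x) = lam * ξ₂ z₁ z₂ x) :
    ∃ a₁ a₂ : ℝ → ℂ,
      ContinuousOn a₁ (Set.Ici 0) ∧ ContinuousOn a₂ (Set.Ici 0) ∧
      a₁ 0 = 0 ∧ a₂ 0 = 0 ∧
      (∀ x : ℝ, 0 ≤ x → a₁ (φ x) = lam * a₁ x + a₂ x) ∧
      (∀ x : ℝ, 0 ≤ x → a₂ (φ x) = lam * a₂ x) ∧
      ∀ z₁ z₂ : ℂ, ∀ x : ℝ, 0 ≤ x →
        ξ₁ z₁ z₂ x = z₁ + a₁ x ∧ ξ₂ z₁ z₂ x = z₂ + a₂ x :=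
  case_4_classification_general lam hlam φ hφcont hφbij hφ0 hexp ξ₁ ξ₂ hcont₁ hcont₂ hholo₁ hholo₂
    hbd₁ hbd₂ hL1 hL2
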